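/- Let A be a finitely generated abelian group and B an abelian group, and let f : A → B be a homomorphism such that (i) the restriction of f to the torsion subgroup of A is injective, and (ii) f maps the 2-torsion subgroup A[2] = {a ∈ A : 2a = 0} onto the 2-torsion subgroup B[2]. Suppose further that there are abelian groups H and H', homomorphisms δ : A → H and δ' : B → H' with ker δ = 2A (the subgroup of elements of the form 2a), and an injective homomorphism h : H → H' with h∘δ = δ'∘f. Then f is injective. -/

import Mathlib

/-!
An element of `ker f` lies in `ker δ = 2A`, say `a = 2a'`; then `f a'` is 2-torsion in `B`, hence
equals `f t` for some `t ∈ A[2]`, and `a = 2(a' - t)` with `a' - t ∈ ker f`. So `ker f = 2 ker f`,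
and since `ker f` is finitely generated, Nakayama's lemma makes it torsion. Injectivity of `f` on
the torsion subgroup then forces `ker f = 0`.
-/

theorem AddSubgroup.isOfFinAddOrder_of_forall_mem_eq_nsmul {A : Type*} [AddCommGroup A]
    [AddGroup.FG A] (K : AddSubgroup A) {n : ℕ} (hn : n ≠ 1)
    (hK : ∀ a ∈ K, ∃ c ∈ K, a = n • c) {a : A} (ha : a ∈ K) : IsOfFinAddOrder a := by
  have : Module.Finite ℤ A := Module.Finite.iff_addGroup_fg.mpr ‹_›
  have hle : K.toIntSubmodule ≤ Ideal.span {(n : ℤ)} • K.toIntSubmodule := by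
    intro a ha
    obtain ⟨c, hc, rfl⟩ := hK a ha
    rw [← natCast_zsmul]
    exact Submodule.smul_mem_smul (Ideal.mem_span_singleton_self _) hc
  obtain ⟨r, hr1, hr0⟩ := Submodule.exists_sub_one_mem_and_smul_eq_zero_of_fg_of_le_smul _ _
    (IsNoetherian.noetherian K.toIntSubmodule) hle
  have hr : r ≠ 0 := by
    rintro rfl
    obtain ⟨k, hk⟩ := Ideal.mem_span_singleton.mp hr1
    exact hn (by exact_mod_cast Int.eq_one_of_dvd_one (Int.natCast_nonneg n) ⟨-k, by linarith⟩)
  exact isOfFinAddOrder_iff_zsmul_eq_zero.mpr ⟨r, hr, hr0 a ha⟩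

theorem AddMonoidHom.exists_mem_ker_eq_two_nsmul {A B : Type*} [AddCommGroup A] [AddCommGroup B]
    (f : A →+ B) (h2tors : ∀ b : B, 2 • b = 0 → ∃ a : A, 2 • a = 0 ∧ f a = b)
    {a : A} (ha : a ∈ f.ker) (ha' : ∃ a' : A, a = 2 • a') : ∃ c ∈ f.ker, a = 2 • c := by
  obtain ⟨a', rfl⟩ := ha'
  have hfa' : 2 • f a' = 0 := by rw [← map_nsmul]; exact ha
  obtain ⟨t, ht, hft⟩ := h2tors (f a') hfa'
  refine ⟨a' - t, ?_, by rw [nsmul_sub, ht, sub_zero]⟩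
  rw [AddMonoidHom.mem_ker, map_sub, hft, sub_self]

/-- Let `A` be a finitely generated abelian group, `f : A → B` a homomorphism that is
injective on the torsion subgroup of `A` and maps `A[2]` onto `B[2]`. Suppose there are
homomorphisms `δ : A → H` with `ker δ = 2A`, `δ' : B → H'`, and an injective homomorphism
`h : H → H'` with `h ∘ δ = δ' ∘ f`. Then `f` is injective. -/
theorem specialization_injective
    {A B H H' : Type*} [AddCommGroup A] [AddCommGroup B] [AddCommGroup H] [AddCommGroup H']
    [AddGroup.FG A]
    (f : A →+ B)
    (htors : ∀ a a' : A, IsOfFinAddOrder a → IsOfFinAddOrder a' → f a = f a' → a = a')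
    (h2tors : ∀ b : B, 2 • b = 0 → ∃ a : A, 2 • a = 0 ∧ f a = b)
    (δ : A →+ H) (δ' : B →+ H')
    (hkerδ : ∀ a : A, δ a = 0 ↔ ∃ a' : A, a = 2 • a')
    (h : H →+ H') (hinj : Function.Injective h)
    (hcomm : ∀ a : A, h (δ a) = δ' (f a)) :
    Function.Injective f := by
  have hker_two : ∀ a ∈ f.ker, ∃ c ∈ f.ker, a = 2 • c := fun a ha =>
    f.exists_mem_ker_eq_two_nsmul h2tors ha <| (hkerδ a).mp <| hinj <| by
      rw [hcomm, AddMonoidHom.mem_ker.mp ha, map_zero, map_zero]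
  rw [injective_iff_map_eq_zero]
  intro a ha
  exact htors a 0 (f.ker.isOfFinAddOrder_of_forall_mem_eq_nsmul (by norm_num) hker_two ha)
    .zero (by rw [ha, map_zero])
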